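/- arXiv:2412.00995 — 3 statements merged into one kernel-verified Lean document; each statement's English description precedes it below -/
import Mathlib

section
/- Let p be prime, g ∈ ℤ_p[x], and a ∈ ℤ_p with g(a) ≠ 0. Let λ = v_p(g(a)) and μ = v_p(g'(a)) (p-adic valuations). If λ > 2μ, then {g(a+ξ) : ξ ∈ p^{λ−μ}ℤ_p} = p^λ ℤ_p. -/
/-!
Write `g(a + ξ) = g(a) + g'(a) ξ + k ξ²`. If `p^(λ-μ) ∣ ξ`, each term is divisible by `p^λ`
because `λ ≤ 2(λ - μ)`. Conversely, for `p^λ ∣ x` the polynomial `g - x` satisfies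
`‖g(a) - x‖ ≤ p^(-λ) < p^(-2μ) = ‖g'(a)‖²`, so Hensel's lemma gives a root `a + ξ` with
`‖ξ‖ < ‖g'(a)‖`. In that range the quadratic term is strictly smaller than the linear one,
so `‖g'(a) ξ‖ = ‖g(a) - x‖ ≤ p^(-λ)`, i.e. `p^(λ-μ) ∣ ξ`.
-/

open Polynomial

namespace Polynomial

theorem pow_dvd_eval_add {R : Type*} [CommRing R] {π : R} {g : R[X]} {a ξ : R} {lam mu : ℕ}
    (hlam : π ^ lam ∣ g.eval a) (hmu : π ^ mu ∣ g.derivative.eval a)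
    (hξ : π ^ (lam - mu) ∣ ξ) (hgt : 2 * mu ≤ lam) :
    π ^ lam ∣ g.eval (a + ξ) := by
  obtain ⟨k, hk⟩ := g.binomExpansion a ξ
  rw [hk]
  have hlin : π ^ lam ∣ g.derivative.eval a * ξ := by
    rw [show lam = mu + (lam - mu) by omega, pow_add]
    exact mul_dvd_mul hmu hξ
  have hquad : π ^ lam ∣ ξ ^ 2 :=
    (pow_dvd_pow π (by omega : lam ≤ (lam - mu) * 2)).trans
      (pow_mul π _ 2 ▸ pow_dvd_pow_of_dvd hξ 2)
  exact dvd_add (dvd_add hlam hlin) (hquad.mul_left k)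

end Polynomial

namespace PadicInt

variable {p : ℕ} [Fact p.Prime]

theorem pow_dvd_iff_norm_le {x : ℤ_[p]} {n : ℕ} :
    (p : ℤ_[p]) ^ n ∣ x ↔ ‖x‖ ≤ ‖(p : ℤ_[p])‖ ^ n := by
  rw [← norm_pow, norm_p_pow, norm_le_pow_iff_mem_span_pow, Ideal.mem_span_singleton]

theorem norm_eq_of_pow_dvd_of_not_pow_succ_dvd {x : ℤ_[p]} {n : ℕ}
    (h : (p : ℤ_[p]) ^ n ∣ x) (h' : ¬ (p : ℤ_[p]) ^ (n + 1) ∣ x) :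
    ‖x‖ = ‖(p : ℤ_[p])‖ ^ n := by
  obtain ⟨w, rfl⟩ := h
  have hw : ¬ (p : ℤ_[p]) ∣ w := fun hw => h' (pow_succ (p : ℤ_[p]) n ▸ mul_dvd_mul_left _ hw)
  rw [← norm_lt_one_iff_dvd, not_lt] at hw
  rw [norm_mul, norm_pow, le_antisymm (norm_le_one w) hw, mul_one]

theorem norm_eval_eq_of_eval_eq_zero {F : ℤ_[p][X]} {a z : ℤ_[p]} (hz : F.eval z = 0)
    (hza : ‖z - a‖ < ‖F.derivative.eval a‖) :
    ‖F.eval a‖ = ‖F.derivative.eval a‖ * ‖z - a‖ := by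
  obtain ⟨k, hk⟩ := F.binomExpansion a (z - a)
  rw [add_sub_cancel, hz] at hk
  rcases eq_or_ne z a with rfl | hξ
  · simp [hz]
  have hquad : ‖k * (z - a) ^ 2‖ < ‖F.derivative.eval a * (z - a)‖ := by
    rw [norm_mul, norm_mul, norm_pow, sq]
    calc ‖k‖ * (‖z - a‖ * ‖z - a‖) ≤ ‖z - a‖ * ‖z - a‖ :=
          mul_le_of_le_one_left (by positivity) (norm_le_one k)
      _ < ‖F.derivative.eval a‖ * ‖z - a‖ :=
          mul_lt_mul_of_pos_right hza (norm_pos_iff.mpr (sub_ne_zero.mpr hξ))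
  have hFa : F.eval a = -(F.derivative.eval a * (z - a) + k * (z - a) ^ 2) := by
    linear_combination -hk
  rw [hFa, norm_neg, norm_add_eq_max_of_ne hquad.ne', max_eq_left hquad.le, norm_mul]

theorem exists_eval_add_eq_zero_of_norm_le {F : ℤ_[p][X]} {a : ℤ_[p]} {lam mu : ℕ}
    (hlam : ‖F.eval a‖ ≤ ‖(p : ℤ_[p])‖ ^ lam)
    (hmu : ‖F.derivative.eval a‖ = ‖(p : ℤ_[p])‖ ^ mu) (hgt : 2 * mu < lam) :
    ∃ ξ : ℤ_[p], ‖ξ‖ ≤ ‖(p : ℤ_[p])‖ ^ (lam - mu) ∧ F.eval (a + ξ) = 0 := by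
  have hp0 : 0 < ‖(p : ℤ_[p])‖ := by
    rw [norm_p]; exact inv_pos.mpr (Nat.cast_pos.mpr (Fact.out : p.Prime).pos)
  have hnorm : ‖F.eval a‖ < ‖F.derivative.eval a‖ ^ 2 := by
    rw [hmu, ← pow_mul, mul_comm]
    exact hlam.trans_lt
      (pow_lt_pow_right_of_lt_one₀ hp0 (norm_natCast_lt_one_iff.mpr dvd_rfl) hgt)
  obtain ⟨z, hz, hza, -⟩ := hensels_lemma (F := F) (a := a) (by simpa using hnorm)
  simp only [coe_aeval_eq_eval] at hz hza
  refine ⟨z - a, ?_, by rwa [add_sub_cancel]⟩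
  have h := norm_eval_eq_of_eval_eq_zero hz hza ▸ hlam
  rw [hmu, show lam = mu + (lam - mu) by omega, pow_add] at h
  exact le_of_mul_le_mul_left h (pow_pos hp0 mu)

end PadicInt

namespace BQPaper8

theorem hensel_image_general (p : ℕ) [Fact p.Prime] (g : Polynomial ℤ_[p]) (a : ℤ_[p])
    (lam mu : ℕ)
    (hlam : (p : ℤ_[p]) ^ lam ∣ g.eval a)
    (hmu : (p : ℤ_[p]) ^ mu ∣ (Polynomial.derivative g).eval a)
    (hmu' : ¬ (p : ℤ_[p]) ^ (mu + 1) ∣ (Polynomial.derivative g).eval a)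
    (hgt : 2 * mu < lam) :
    (fun ξ : ℤ_[p] => g.eval (a + ξ)) '' {ξ : ℤ_[p] | (p : ℤ_[p]) ^ (lam - mu) ∣ ξ}
      = {x : ℤ_[p] | (p : ℤ_[p]) ^ lam ∣ x} := by
  ext x
  constructor
  · rintro ⟨ξ, hξ, rfl⟩
    exact pow_dvd_eval_add hlam hmu hξ hgt.le
  · intro hx
    have hFa : ‖(g - C x).eval a‖ ≤ ‖(p : ℤ_[p])‖ ^ lam := by
      rw [eval_sub, eval_C, ← PadicInt.pow_dvd_iff_norm_le]
      exact dvd_sub hlam hx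
    have hF'a : ‖(g - C x).derivative.eval a‖ = ‖(p : ℤ_[p])‖ ^ mu := by
      rw [derivative_sub, derivative_C, sub_zero]
      exact PadicInt.norm_eq_of_pow_dvd_of_not_pow_succ_dvd hmu hmu'
    obtain ⟨ξ, hξ, hroot⟩ := PadicInt.exists_eval_add_eq_zero_of_norm_le hFa hF'a hgt
    rw [eval_sub, eval_C, sub_eq_zero] at hroot
    exact ⟨ξ, PadicInt.pow_dvd_iff_norm_le.mpr hξ, hroot⟩

/-- a version of Hensel's lemma.  Let `p` be prime, `g ∈ ℤ_p[x]`,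
and `a ∈ ℤ_p` with `g(a) ≠ 0`.  If `λ = v_p(g(a))` and `μ = v_p(g'(a))` (expressed via
exact divisibility) satisfy `λ > 2μ`, then `{g(a+ξ) : ξ ∈ p^(λ−μ)ℤ_p} = p^λ ℤ_p`. -/
theorem hensel_image (p : ℕ) [Fact p.Prime] (g : Polynomial ℤ_[p]) (a : ℤ_[p])
    (hga : g.eval a ≠ 0) (lam mu : ℕ)
    (hlam : (p : ℤ_[p]) ^ lam ∣ g.eval a) (hlam' : ¬ (p : ℤ_[p]) ^ (lam + 1) ∣ g.eval a)
    (hmu : (p : ℤ_[p]) ^ mu ∣ (Polynomial.derivative g).eval a)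
    (hmu' : ¬ (p : ℤ_[p]) ^ (mu + 1) ∣ (Polynomial.derivative g).eval a)
    (hgt : 2 * mu < lam) :
    (fun ξ : ℤ_[p] => g.eval (a + ξ)) '' {ξ : ℤ_[p] | (p : ℤ_[p]) ^ (lam - mu) ∣ ξ}
      = {x : ℤ_[p] | (p : ℤ_[p]) ^ lam ∣ x} :=
  hensel_image_general p g a lam mu hlam hmu hmu' hgt

end BQPaper8
end

section
/- Let p be a prime and k ≥ 1 an integer. Suppose the coefficients of f(x,y) = ax⁴+bx³y+cx²y²+dxy³+ey⁴ ∈ V(ℤ_p) satisfy either (p^{2k+1} ∣ a, p^{k+1} ∣ b, p ∣ d, and p ∣ e) or (p ∣ b, p ∣ c, p^{k} ∣ d, and p^{2k} ∣ e). Then p^{2k+2} divides Δ(f). -/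
noncomputable section

namespace BQPaper

/-- A binary quartic form `a x⁴ + b x³y + c x²y² + d xy³ + e y⁴` over `R`,
recorded by its coefficients. -/
structure BQ (R : Type*) where
  a : R
  b : R
  c : R
  d : R
  e : R

/-- A 2×2 matrix `!![p, q; r, s]`, recorded by its entries. -/
structure Mat2 (R : Type*) where
  p : R
  q : R
  r : R
  s : R

variable {R S : Type*} [CommRing R] [CommRing S]

def Mat2.det (m : Mat2 R) : R := m.p * m.s - m.q * m.r

/-- Matrix product. -/
def Mat2.mul (m n : Mat2 R) : Mat2 R :=
  ⟨m.p * n.p + m.q * n.r, m.p * n.q + m.q * n.s,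
   m.r * n.p + m.s * n.r, m.r * n.q + m.s * n.s⟩

/-- Scalar multiple of a matrix. -/
def Mat2.smul (z : R) (m : Mat2 R) : Mat2 R := ⟨z * m.p, z * m.q, z * m.r, z * m.s⟩

def Mat2.map (φ : R →+* S) (m : Mat2 R) : Mat2 S := ⟨φ m.p, φ m.q, φ m.r, φ m.s⟩

/-- Evaluation of a binary quartic form at `(x, y)`. -/
def BQ.eval (f : BQ R) (x y : R) : R :=
  f.a * x ^ 4 + f.b * x ^ 3 * y + f.c * x ^ 2 * y ^ 2 + f.d * x * y ^ 3 + f.e * y ^ 4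

/-- The invariant `I(f) = 12ae − 3bd + c²`. -/
def BQ.invI (f : BQ R) : R := 12 * f.a * f.e - 3 * f.b * f.d + f.c ^ 2

/-- The invariant `J(f) = 72ace + 9bcd − 27ad² − 27eb² − 2c³`. -/
def BQ.invJ (f : BQ R) : R :=
  72 * f.a * f.c * f.e + 9 * f.b * f.c * f.d - 27 * f.a * f.d ^ 2
    - 27 * f.e * f.b ^ 2 - 2 * f.c ^ 3

/-- The discriminant of a binary quartic form; one has `Δ = (4I³ − J²)/27`. -/
def BQ.disc (f : BQ R) : R :=
  256 * f.a ^ 3 * f.e ^ 3 - 192 * f.a ^ 2 * f.b * f.d * f.e ^ 2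
    - 128 * f.a ^ 2 * f.c ^ 2 * f.e ^ 2 + 144 * f.a ^ 2 * f.c * f.d ^ 2 * f.e
    - 27 * f.a ^ 2 * f.d ^ 4 + 144 * f.a * f.b ^ 2 * f.c * f.e ^ 2
    - 6 * f.a * f.b ^ 2 * f.d ^ 2 * f.e - 80 * f.a * f.b * f.c ^ 2 * f.d * f.e
    + 18 * f.a * f.b * f.c * f.d ^ 3 + 16 * f.a * f.c ^ 4 * f.e
    - 4 * f.a * f.c ^ 3 * f.d ^ 2 - 27 * f.b ^ 4 * f.e ^ 2
    + 18 * f.b ^ 3 * f.c * f.d * f.e - 4 * f.b ^ 3 * f.d ^ 3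
    - 4 * f.b ^ 2 * f.c ^ 3 * f.e + f.b ^ 2 * f.c ^ 2 * f.d ^ 2

/-- Multiplication of all coefficients of a form by a scalar. -/
def BQ.rsmul (t : R) (f : BQ R) : BQ R := ⟨t * f.a, t * f.b, t * f.c, t * f.d, t * f.e⟩

/-- Substitution action of a 2×2 matrix on binary quartic forms:
`(m • f)(x,y) = f((x,y)·m) = f(px + ry, qx + sy)` for `m = !![p, q; r, s]`. -/
def BQ.subst (m : Mat2 R) (f : BQ R) : BQ R where
  a := f.a * m.p ^ 4 + f.b * m.p ^ 3 * m.q + f.c * m.p ^ 2 * m.q ^ 2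
      + f.d * m.p * m.q ^ 3 + f.e * m.q ^ 4
  b := 4 * f.a * m.p ^ 3 * m.r + f.b * m.p ^ 3 * m.s + 3 * f.b * m.p ^ 2 * m.q * m.r
      + 2 * f.c * m.p ^ 2 * m.q * m.s + 2 * f.c * m.p * m.q ^ 2 * m.r
      + 3 * f.d * m.p * m.q ^ 2 * m.s + f.d * m.q ^ 3 * m.r + 4 * f.e * m.q ^ 3 * m.s
  c := 6 * f.a * m.p ^ 2 * m.r ^ 2 + 3 * f.b * m.p ^ 2 * m.r * m.s
      + 3 * f.b * m.p * m.q * m.r ^ 2 + f.c * m.p ^ 2 * m.s ^ 2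
      + 4 * f.c * m.p * m.q * m.r * m.s + f.c * m.q ^ 2 * m.r ^ 2
      + 3 * f.d * m.p * m.q * m.s ^ 2 + 3 * f.d * m.q ^ 2 * m.r * m.s
      + 6 * f.e * m.q ^ 2 * m.s ^ 2
  d := 4 * f.a * m.p * m.r ^ 3 + 3 * f.b * m.p * m.r ^ 2 * m.s + f.b * m.q * m.r ^ 3
      + 2 * f.c * m.p * m.r * m.s ^ 2 + 2 * f.c * m.q * m.r ^ 2 * m.s
      + f.d * m.p * m.s ^ 3 + 3 * f.d * m.q * m.r * m.s ^ 2 + 4 * f.e * m.q * m.s ^ 3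
  e := f.a * m.r ^ 4 + f.b * m.r ^ 3 * m.s + f.c * m.r ^ 2 * m.s ^ 2
      + f.d * m.r * m.s ^ 3 + f.e * m.s ^ 4

/-- The twisted action `(γ·f)(x,y) = f((x,y)·γ)/det(γ)²`, which descends to `PGL₂`.
(`Ring.inverse` is the genuine inverse when `det` is a unit.) -/
def BQ.twist (m : Mat2 R) (f : BQ R) : BQ R :=
  BQ.rsmul (Ring.inverse m.det ^ 2) (f.subst m)

/-- Coefficientwise map of forms along a ring homomorphism. -/
def BQ.map (φ : R →+* S) (f : BQ R) : BQ S := ⟨φ f.a, φ f.b, φ f.c, φ f.d, φ f.e⟩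

end BQPaper

namespace BQPaper

set_option maxHeartbeats 1000000 in
/-- Let `p` be a prime and `k ≥ 1`.  If the coefficients of a binary
quartic form `f = (a,b,c,d,e)` over `ℤ_p` satisfy either
`p^{2k+1} ∣ a`, `p^{k+1} ∣ b`, `p ∣ d`, `p ∣ e`, or
`p ∣ b`, `p ∣ c`, `p^k ∣ d`, `p^{2k} ∣ e`,
then `p^{2k+2} ∣ Δ(f)`. -/
theorem disc_divisibility (p : ℕ) [Fact p.Prime] (k : ℕ) (hk : 1 ≤ k) (f : BQ ℤ_[p])
    (h : ((p : ℤ_[p]) ^ (2 * k + 1) ∣ f.a ∧ (p : ℤ_[p]) ^ (k + 1) ∣ f.b ∧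
          (p : ℤ_[p]) ∣ f.d ∧ (p : ℤ_[p]) ∣ f.e) ∨
         ((p : ℤ_[p]) ∣ f.b ∧ (p : ℤ_[p]) ∣ f.c ∧
          (p : ℤ_[p]) ^ k ∣ f.d ∧ (p : ℤ_[p]) ^ (2 * k) ∣ f.e)) :
    (p : ℤ_[p]) ^ (2 * k + 2) ∣ f.disc := by
  have key : ∀ (x y : ℤ_[p]) (m n : ℕ), (p : ℤ_[p]) ^ m ∣ x → (p : ℤ_[p]) ^ n ∣ y →
      2 * k + 2 ≤ m + n → (p : ℤ_[p]) ^ (2 * k + 2) ∣ x * y := by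
    intro x y m n hx hy hmn
    exact (pow_dvd_pow _ hmn).trans (by rw [pow_add]; exact mul_dvd_mul hx hy)
  rcases h with ⟨ha, hb, hd, he⟩ | ⟨hb, hc, hd, he⟩
  · have hd1 : (p : ℤ_[p]) ^ 1 ∣ f.d := by simpa using hd
    have he1 : (p : ℤ_[p]) ^ 1 ∣ f.e := by simpa using he
    have hae := key f.a f.e _ _ ha he1 (by omega)
    have had := key f.a f.d _ _ ha hd1 (by omega)
    have hb2 := key f.b f.b _ _ hb hb (by omega)
    unfold BQ.disc
    repeat' first | apply dvd_sub | apply dvd_add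
    · exact hae.trans ⟨256 * f.a ^ 2 * f.e ^ 2, by ring⟩
    · exact hae.trans ⟨192 * f.a * f.b * f.d * f.e, by ring⟩
    · exact hae.trans ⟨128 * f.a * f.c ^ 2 * f.e, by ring⟩
    · exact hae.trans ⟨144 * f.a * f.c * f.d ^ 2, by ring⟩
    · exact had.trans ⟨27 * f.a * f.d ^ 3, by ring⟩
    · exact hae.trans ⟨144 * f.b ^ 2 * f.c * f.e, by ring⟩
    · exact hae.trans ⟨6 * f.b ^ 2 * f.d ^ 2, by ring⟩
    · exact hae.trans ⟨80 * f.b * f.c ^ 2 * f.d, by ring⟩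
    · exact had.trans ⟨18 * f.b * f.c * f.d ^ 2, by ring⟩
    · exact hae.trans ⟨16 * f.c ^ 4, by ring⟩
    · exact had.trans ⟨4 * f.c ^ 3 * f.d, by ring⟩
    · exact hb2.trans ⟨27 * f.b ^ 2 * f.e ^ 2, by ring⟩
    · exact hb2.trans ⟨18 * f.b * f.c * f.d * f.e, by ring⟩
    · exact hb2.trans ⟨4 * f.b * f.d ^ 3, by ring⟩
    · exact hb2.trans ⟨4 * f.c ^ 3 * f.e, by ring⟩
    · exact hb2.trans ⟨f.c ^ 2 * f.d ^ 2, by ring⟩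
  · have hd2 : (p : ℤ_[p]) ^ (2 * k) ∣ f.d * f.d := by
      rw [two_mul, pow_add]; exact mul_dvd_mul hd hd
    have hbc : (p : ℤ_[p]) ^ 2 ∣ f.b * f.c := by
      rw [pow_two]; exact mul_dvd_mul hb hc
    have hc2 : (p : ℤ_[p]) ^ 2 ∣ f.c * f.c := by
      rw [pow_two]; exact mul_dvd_mul hc hc
    have hb2 : (p : ℤ_[p]) ^ 2 ∣ f.b * f.b := by
      rw [pow_two]; exact mul_dvd_mul hb hb
    have he2 := key f.e f.e _ _ he he (by omega)
    have hd2e := key (f.d * f.d) f.e _ _ hd2 he (by omega)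
    have hd4 := key (f.d * f.d) (f.d * f.d) _ _ hd2 hd2 (by omega)
    have hbce := key (f.b * f.c) f.e _ _ hbc he (by omega)
    have hbcd2 := key (f.b * f.c) (f.d * f.d) _ _ hbc hd2 (by omega)
    have hc2e := key (f.c * f.c) f.e _ _ hc2 he (by omega)
    have hc2d2 := key (f.c * f.c) (f.d * f.d) _ _ hc2 hd2 (by omega)
    have hb2d2 := key (f.b * f.b) (f.d * f.d) _ _ hb2 hd2 (by omega)
    unfold BQ.disc
    repeat' first | apply dvd_sub | apply dvd_add
    · exact he2.trans ⟨256 * f.a ^ 3 * f.e, by ring⟩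
    · exact he2.trans ⟨192 * f.a ^ 2 * f.b * f.d, by ring⟩
    · exact he2.trans ⟨128 * f.a ^ 2 * f.c ^ 2, by ring⟩
    · exact hd2e.trans ⟨144 * f.a ^ 2 * f.c, by ring⟩
    · exact hd4.trans ⟨27 * f.a ^ 2, by ring⟩
    · exact he2.trans ⟨144 * f.a * f.b ^ 2 * f.c, by ring⟩
    · exact hd2e.trans ⟨6 * f.a * f.b ^ 2, by ring⟩
    · exact hbce.trans ⟨80 * f.a * f.c * f.d, by ring⟩
    · exact hbcd2.trans ⟨18 * f.a * f.d, by ring⟩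
    · exact hc2e.trans ⟨16 * f.a * f.c ^ 2, by ring⟩
    · exact hc2d2.trans ⟨4 * f.a * f.c, by ring⟩
    · exact he2.trans ⟨27 * f.b ^ 4, by ring⟩
    · exact hbce.trans ⟨18 * f.b ^ 2 * f.d, by ring⟩
    · exact hb2d2.trans ⟨4 * f.b * f.d, by ring⟩
    · exact hc2e.trans ⟨4 * f.b ^ 2 * f.c, by ring⟩
    · exact hc2d2.trans ⟨f.b ^ 2, by ring⟩

end BQPaper
end
end

section
/- Define N(k) := ∏_{p^e ∥ k} p^{⌊e/2⌋} for nonzero integers k (so N(±1) = 1). Then for every ε > 0 there is a constant C_ε such that for all real numbers D, R ≥ 1: Σ_{d, r ∈ ℤ, 0 < |d| ≤ D, 0 < |r| ≤ R} N(d r³) ≤ C_ε D^{1+ε} R^{2+ε}. -/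
/-!
Writing `a b³ = (a b) b²`, the identity `⌊(e + 2f)/2⌋ = f + ⌊e/2⌋` on prime exponents gives
`N(a b³) = b N(a b)`, so it suffices to bound `∑_{a ≤ A, b ≤ B} N(a b)`. Since `N(n)² ∣ n`, we have
`N(a b) ≤ ∑_{m² ∣ a b} m`, and the pairs `(a, b)` of the box with `k ∣ a b` number at most
`τ(k) A B / k` (split `k = u v` with `u ∣ a`, `v ∣ b`). Hence the sum is at most
`A B ∑_{m ≤ A B} τ(m)² / m`; as `τ(m)² ≤ (τ ∗ τ)(m)`, this is at most `A B (∑_{n ≤ A B} τ(n) / n)²`,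
and `∑_{n ≤ X} τ(n) / n ≤ (∑_{n ≤ X} 1 / n)² ≤ (1 + log X)²`. Finally `(1 + log x)⁴ ≪_ε x^ε`, and
the signs of `d` and `r` only contribute a factor `4`.
-/

noncomputable section

namespace BQPaper18

/-- `N(k) = ∏_{p^e ∥ k} p^{⌊e/2⌋}` for a nonzero integer `k`:
the largest integer whose square divides `k` up to squarefree factors. -/
def N (k : ℤ) : ℕ :=
  ∏ p ∈ k.natAbs.primeFactors, p ^ (k.natAbs.factorization p / 2)

open Finset Real

def Nnat (n : ℕ) : ℕ := n.factorization.prod fun p e => p ^ (e / 2)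

lemma N_eq_Nnat (k : ℤ) : N k = Nnat k.natAbs := by
  simp [N, Nnat, Finsupp.prod, Nat.support_factorization]

lemma Nnat_sq_dvd (n : ℕ) : Nnat n ^ 2 ∣ n := by
  rcases eq_or_ne n 0 with rfl | hn
  · exact dvd_zero _
  conv_rhs => rw [← Nat.prod_factorization_pow_eq_self hn]
  rw [Nnat, Finsupp.prod, Finsupp.prod, ← prod_pow]
  refine prod_dvd_prod_of_dvd _ _ fun p _ => ?_
  rw [← pow_mul]
  exact pow_dvd_pow p (Nat.div_mul_le_self _ 2)

lemma Nnat_mem_Ioc {n : ℕ} (hn : n ≠ 0) : Nnat n ∈ Ioc 0 n := by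
  have hdvd := Nnat_sq_dvd n
  have hpos : 0 < Nnat n := Nat.pos_of_ne_zero fun h => hn (by simpa [h] using hdvd)
  exact mem_Ioc.2 ⟨hpos, (Nat.le_self_pow two_ne_zero _).trans (Nat.le_of_dvd (by omega) hdvd)⟩

lemma Nnat_mul_sq {n c : ℕ} (hn : n ≠ 0) (hc : c ≠ 0) : Nnat (n * c ^ 2) = c * Nnat n := by
  have hc2 : c ^ 2 ≠ 0 := pow_ne_zero 2 hc
  set s := n.primeFactors ∪ c.primeFactors
  have hsupp : ∀ m : ℕ, m.primeFactors ⊆ s → ∀ g : ℕ → ℕ → ℕ, (∀ p, g p 0 = 1) →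
      m.factorization.prod g = ∏ p ∈ s, g p (m.factorization p) := fun m hs g hg =>
    Finsupp.prod_of_support_subset _ (by rwa [Nat.support_factorization]) g fun p _ => hg p
  have hs : (n * c ^ 2).primeFactors = s := by
    rw [Nat.primeFactors_mul hn hc2, Nat.primeFactors_pow c two_ne_zero]
  conv_rhs => rw [← Nat.prod_factorization_pow_eq_self hc]
  rw [Nnat, Nnat, hsupp _ hs.le _ (by simp), hsupp c subset_union_right _ (by simp),
    hsupp n subset_union_left _ (by simp),
    ← prod_mul_distrib]
  refine prod_congr rfl fun p _ => ?_
  rw [Nat.factorization_mul hn hc2, Nat.factorization_pow, ← pow_add]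
  congr 1
  simp only [Finsupp.add_apply, Finsupp.smul_apply, smul_eq_mul]
  omega

lemma card_divisors_mul_le (m n : ℕ) : #(m * n).divisors ≤ #m.divisors * #n.divisors := by
  rw [Nat.divisors_mul]
  exact card_mul_le

lemma card_divisors_sq_le_sum (n : ℕ) :
    #n.divisors ^ 2 ≤ ∑ x ∈ n.divisorsAntidiagonal, #x.1.divisors * #x.2.divisors := by
  rw [Nat.sum_divisorsAntidiagonal (fun a b => #a.divisors * #b.divisors), sq, ← smul_eq_mul,
    ← sum_const]
  refine sum_le_sum fun d hd => ?_
  conv_lhs => rw [← Nat.mul_div_cancel' (Nat.dvd_of_mem_divisors hd)]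
  exact card_divisors_mul_le _ _

lemma sum_Ioc_inv_le (X : ℕ) : ∑ n ∈ Ioc 0 X, (n : ℝ)⁻¹ ≤ 1 + log X := by
  have := harmonic_le_one_add_log X
  rw [← Icc_add_one_left_eq_Ioc, zero_add]
  simpa [harmonic_eq_sum_Icc] using this

lemma sum_Ioc_convolution_div_le (f g : ℕ → ℝ) (hf : ∀ n, 0 ≤ f n) (hg : ∀ n, 0 ≤ g n)
    (X : ℕ) :
    ∑ n ∈ Ioc 0 X, (∑ x ∈ n.divisorsAntidiagonal, f x.1 * g x.2) / n ≤
      (∑ n ∈ Ioc 0 X, f n / n) * ∑ n ∈ Ioc 0 X, g n / n := by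
  set F : ℕ × ℕ → ℝ := fun x => f x.1 / x.1 * (g x.2 / x.2)
  calc ∑ n ∈ Ioc 0 X, (∑ x ∈ n.divisorsAntidiagonal, f x.1 * g x.2) / n
      = ∑ n ∈ Ioc 0 X, ∑ x ∈ Ioc 0 X ×ˢ Ioc 0 X, if x.1 * x.2 = n then F x else 0 := by
        refine sum_congr rfl fun n hn => ?_
        rw [mem_Ioc] at hn
        rw [Nat.divisorsAntidiagonal_eq_prod_filter_of_le hn.1.ne' hn.2, sum_div, sum_filter]
        refine sum_congr rfl fun x _ => ?_
        split_ifs with hx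
        · simp only [F, ← hx, Nat.cast_mul]
          ring
        · rfl
    _ = ∑ x ∈ Ioc 0 X ×ˢ Ioc 0 X, ∑ n ∈ Ioc 0 X, if x.1 * x.2 = n then F x else 0 := sum_comm
    _ ≤ ∑ x ∈ Ioc 0 X ×ˢ Ioc 0 X, F x := by
        refine sum_le_sum fun x _ => ?_
        rw [sum_ite_eq]
        split_ifs
        · rfl
        · exact mul_nonneg (div_nonneg (hf _) x.1.cast_nonneg) (div_nonneg (hg _) x.2.cast_nonneg)
    _ = (∑ n ∈ Ioc 0 X, f n / n) * ∑ n ∈ Ioc 0 X, g n / n := by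
        rw [sum_product, sum_mul_sum]

lemma sum_card_divisors_div_le (X : ℕ) :
    ∑ n ∈ Ioc 0 X, (#n.divisors : ℝ) / n ≤ (1 + log X) ^ 2 := by
  calc ∑ n ∈ Ioc 0 X, (#n.divisors : ℝ) / n
      = ∑ n ∈ Ioc 0 X, (∑ x ∈ n.divisorsAntidiagonal, (1 : ℝ) * 1) / n := by
        simp [Nat.sum_divisorsAntidiagonal (fun _ _ => (1 : ℝ))]
    _ ≤ (∑ n ∈ Ioc 0 X, (1 : ℝ) / n) * ∑ n ∈ Ioc 0 X, (1 : ℝ) / n :=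
        sum_Ioc_convolution_div_le _ _ (fun _ => zero_le_one) (fun _ => zero_le_one) X
    _ ≤ (1 + log X) ^ 2 := by
        simp only [one_div, ← sq]
        exact pow_le_pow_left₀ (sum_nonneg fun _ _ => by positivity) (sum_Ioc_inv_le X) 2

lemma sum_card_divisors_sq_div_le (X : ℕ) :
    ∑ n ∈ Ioc 0 X, (#n.divisors : ℝ) ^ 2 / n ≤ (1 + log X) ^ 4 := by
  have hτ : ∀ n : ℕ, 0 ≤ (#n.divisors : ℝ) := fun _ => Nat.cast_nonneg _
  calc ∑ n ∈ Ioc 0 X, (#n.divisors : ℝ) ^ 2 / n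
      ≤ ∑ n ∈ Ioc 0 X,
          (∑ x ∈ n.divisorsAntidiagonal, (#x.1.divisors : ℝ) * #x.2.divisors) / n := by
        refine sum_le_sum fun n _ => div_le_div_of_nonneg_right ?_ n.cast_nonneg
        exact_mod_cast card_divisors_sq_le_sum n
    _ ≤ (∑ n ∈ Ioc 0 X, (#n.divisors : ℝ) / n) * ∑ n ∈ Ioc 0 X, (#n.divisors : ℝ) / n :=
        sum_Ioc_convolution_div_le _ _ hτ hτ X
    _ ≤ (1 + log X) ^ 2 * (1 + log X) ^ 2 := by
        have h := sum_card_divisors_div_le X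
        exact mul_le_mul h h (sum_nonneg fun n _ => div_nonneg (hτ n) n.cast_nonneg) (by positivity)
    _ = (1 + log X) ^ 4 := by ring

lemma card_filter_dvd_mul_le (A B : ℕ) {k : ℕ} (hk : k ≠ 0) :
    (#{x ∈ Ioc 0 A ×ˢ Ioc 0 B | k ∣ x.1 * x.2} : ℝ) ≤ A * B * #k.divisors / k := by
  set box : ℕ → Finset (ℕ × ℕ) := fun u => {a ∈ Ioc 0 A | u ∣ a} ×ˢ {b ∈ Ioc 0 B | k / u ∣ b}
  have hcover : {x ∈ Ioc 0 A ×ˢ Ioc 0 B | k ∣ x.1 * x.2} ⊆ k.divisors.biUnion box := by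
    intro x hx
    rw [mem_filter, mem_product] at hx
    obtain ⟨u, v, hu, hv, rfl⟩ := exists_dvd_and_dvd_of_dvd_mul hx.2
    have hu0 : 0 < u := Nat.pos_of_ne_zero (left_ne_zero_of_mul hk)
    simp only [box, mem_biUnion, mem_product, mem_filter, Nat.mem_divisors]
    refine ⟨u, ⟨dvd_mul_right u v, hk⟩, ⟨hx.1.1, hu⟩, hx.1.2, ?_⟩
    rwa [Nat.mul_div_cancel_left v hu0]
  have hbox : ∀ u ∈ k.divisors, (#(box u) : ℝ) ≤ A * B / k := by
    intro u hu
    have huk := Nat.dvd_of_mem_divisors hu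
    have hu0 : (u : ℝ) ≠ 0 := Nat.cast_ne_zero.2 (Nat.pos_of_mem_divisors hu).ne'
    have hku0 : ((k / u : ℕ) : ℝ) ≠ 0 :=
      Nat.cast_ne_zero.2 (Nat.div_pos (Nat.le_of_dvd (Nat.pos_of_ne_zero hk) huk)
        (Nat.pos_of_mem_divisors hu)).ne'
    calc (#(box u) : ℝ) = ((A / u : ℕ) : ℝ) * ((B / (k / u) : ℕ) : ℝ) := by
          simp only [box, card_product, Nat.Ioc_filter_dvd_card_eq_div, Nat.cast_mul]
      _ ≤ (A / u) * (B / ((k / u : ℕ) : ℝ)) :=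
          mul_le_mul Nat.cast_div_le Nat.cast_div_le (Nat.cast_nonneg _) (by positivity)
      _ = A * B / k := by
          rw [Nat.cast_div huk hu0]
          field_simp
  calc (#{x ∈ Ioc 0 A ×ˢ Ioc 0 B | k ∣ x.1 * x.2} : ℝ)
      ≤ ∑ u ∈ k.divisors, (#(box u) : ℝ) := by
        exact_mod_cast (card_le_card hcover).trans card_biUnion_le
    _ ≤ ∑ _u ∈ k.divisors, (A * B / k : ℝ) := sum_le_sum hbox
    _ = A * B * #k.divisors / k := by
        rw [sum_const, nsmul_eq_mul]
        ring

lemma sum_Nnat_mul_le (A B : ℕ) :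
    ∑ x ∈ Ioc 0 A ×ˢ Ioc 0 B, (Nnat (x.1 * x.2) : ℝ) ≤ A * B * (1 + log (A * B)) ^ 4 := by
  set P := Ioc 0 A ×ˢ Ioc 0 B
  have hNnat : ∀ x ∈ P, (Nnat (x.1 * x.2) : ℝ) ≤
      ∑ m ∈ Ioc 0 (A * B), if m ^ 2 ∣ x.1 * x.2 then (m : ℝ) else 0 := by
    intro x hx
    simp only [P, mem_product, mem_Ioc] at hx
    have hmem := Nnat_mem_Ioc (Nat.mul_ne_zero hx.1.1.ne' hx.2.1.ne')
    have hle : Nnat (x.1 * x.2) ∈ Ioc 0 (A * B) :=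
      mem_Ioc.2 ⟨(mem_Ioc.1 hmem).1, (mem_Ioc.1 hmem).2.trans (Nat.mul_le_mul hx.1.2 hx.2.2)⟩
    have h := single_le_sum (f := fun m : ℕ => if m ^ 2 ∣ x.1 * x.2 then (m : ℝ) else 0)
      (fun m _ => by positivity) hle
    rwa [if_pos (Nnat_sq_dvd _)] at h
  have hcount : ∀ m ∈ Ioc 0 (A * B), (#{x ∈ P | m ^ 2 ∣ x.1 * x.2} : ℝ) * m ≤
      A * B * ((#m.divisors : ℝ) ^ 2 / m) := by
    intro m hm
    have hm0 : m ≠ 0 := (mem_Ioc.1 hm).1.ne'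
    have hτ : (#(m ^ 2).divisors : ℝ) ≤ (#m.divisors : ℝ) ^ 2 := by
      have h := card_divisors_mul_le m m
      rw [← sq, ← sq] at h
      exact_mod_cast h
    calc (#{x ∈ P | m ^ 2 ∣ x.1 * x.2} : ℝ) * m
        ≤ A * B * #(m ^ 2).divisors / ((m ^ 2 : ℕ) : ℝ) * m :=
          mul_le_mul_of_nonneg_right (card_filter_dvd_mul_le A B (pow_ne_zero 2 hm0))
            (Nat.cast_nonneg _)
      _ = A * B * (#(m ^ 2).divisors / m) := by
          push_cast
          field_simp
      _ ≤ A * B * ((#m.divisors : ℝ) ^ 2 / m) := by gcongr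
  calc ∑ x ∈ P, (Nnat (x.1 * x.2) : ℝ)
      ≤ ∑ x ∈ P, ∑ m ∈ Ioc 0 (A * B), if m ^ 2 ∣ x.1 * x.2 then (m : ℝ) else 0 :=
        sum_le_sum hNnat
    _ = ∑ m ∈ Ioc 0 (A * B), (#{x ∈ P | m ^ 2 ∣ x.1 * x.2} : ℝ) * m := by
        rw [sum_comm]
        simp only [← sum_filter, sum_const, nsmul_eq_mul]
    _ ≤ ∑ m ∈ Ioc 0 (A * B), A * B * ((#m.divisors : ℝ) ^ 2 / m) := sum_le_sum hcount
    _ ≤ A * B * (1 + log (A * B)) ^ 4 := by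
        rw [← mul_sum, ← Nat.cast_mul]
        exact mul_le_mul_of_nonneg_left (sum_card_divisors_sq_div_le (A * B)) (by positivity)

lemma sum_Nnat_mul_cube_le (A B : ℕ) :
    ∑ x ∈ Ioc 0 A ×ˢ Ioc 0 B, (Nnat (x.1 * x.2 ^ 3) : ℝ) ≤
      A * B ^ 2 * (1 + log (A * B)) ^ 4 := by
  calc ∑ x ∈ Ioc 0 A ×ˢ Ioc 0 B, (Nnat (x.1 * x.2 ^ 3) : ℝ)
      ≤ ∑ x ∈ Ioc 0 A ×ˢ Ioc 0 B, B * (Nnat (x.1 * x.2) : ℝ) := by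
        refine sum_le_sum fun x hx => ?_
        simp only [mem_product, mem_Ioc] at hx
        have h3 : x.1 * x.2 ^ 3 = x.1 * x.2 * x.2 ^ 2 := by ring
        rw [h3, Nnat_mul_sq (Nat.mul_ne_zero hx.1.1.ne' hx.2.1.ne') hx.2.1.ne', Nat.cast_mul]
        exact mul_le_mul_of_nonneg_right (mod_cast hx.2.2) (Nat.cast_nonneg _)
    _ ≤ B * (A * B * (1 + log (A * B)) ^ 4) := by
        rw [← mul_sum]
        exact mul_le_mul_of_nonneg_left (sum_Nnat_mul_le A B) (Nat.cast_nonneg _)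
    _ = A * B ^ 2 * (1 + log (A * B)) ^ 4 := by ring

lemma sum_Icc_neg_natAbs {M : Type*} [AddCommMonoid M] (ψ : ℕ → M) :
    ∀ A : ℕ, ∑ d ∈ Icc (-(A : ℤ)) A, ψ d.natAbs = ψ 0 + 2 • ∑ a ∈ Ioc 0 A, ψ a
  | 0 => by simp
  | A + 1 => by
    have hIcc : Icc (-((A + 1 : ℕ) : ℤ)) (A + 1 : ℕ) =
        insert (-((A + 1 : ℕ) : ℤ)) (insert ((A + 1 : ℕ) : ℤ) (Icc (-(A : ℤ)) A)) := by
      ext d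
      simp only [mem_Icc, mem_insert]
      omega
    rw [hIcc, sum_insert (by simp; omega), sum_insert (by simp), sum_Icc_neg_natAbs ψ A,
      sum_Ioc_succ_top (Nat.zero_le A), Int.natAbs_neg, Int.natAbs_natCast, smul_add, two_nsmul]
    abel

lemma natAbs_mem_Ioc_floor_iff {D : ℝ} (hD : 0 ≤ D) (d : ℤ) :
    d.natAbs ∈ Ioc 0 ⌊D⌋₊ ↔ 0 < |d| ∧ (|d| : ℝ) ≤ D := by
  rw [mem_Ioc, Nat.le_floor_iff hD, Nat.cast_natAbs, Int.cast_abs, abs_pos, Int.natAbs_pos]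

lemma tsum_box_eq (φ : ℕ → ℕ → ℝ) {D R : ℝ} (hD : 0 ≤ D) (hR : 0 ≤ R) :
    (∑' dr : ℤ × ℤ,
        if 0 < |dr.1| ∧ (|dr.1| : ℝ) ≤ D ∧ 0 < |dr.2| ∧ (|dr.2| : ℝ) ≤ R then
          φ dr.1.natAbs dr.2.natAbs
        else 0) =
      4 * ∑ x ∈ Ioc 0 ⌊D⌋₊ ×ˢ Ioc 0 ⌊R⌋₊, φ x.1 x.2 := by
  set ψ : ℕ → ℕ → ℝ := fun a b => if a ∈ Ioc 0 ⌊D⌋₊ ∧ b ∈ Ioc 0 ⌊R⌋₊ then φ a b else 0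
  have hψ : ∀ dr : ℤ × ℤ, (if 0 < |dr.1| ∧ (|dr.1| : ℝ) ≤ D ∧ 0 < |dr.2| ∧ (|dr.2| : ℝ) ≤ R then
      φ dr.1.natAbs dr.2.natAbs else 0) = ψ dr.1.natAbs dr.2.natAbs := by
    intro dr
    simp only [ψ, natAbs_mem_Ioc_floor_iff hD, natAbs_mem_Ioc_floor_iff hR, and_assoc]
  have hrow : ∀ a : ℕ, ∑ r ∈ Icc (-(⌊R⌋₊ : ℤ)) ⌊R⌋₊, ψ a r.natAbs =
      2 • ∑ b ∈ Ioc 0 ⌊R⌋₊, ψ a b := by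
    intro a
    rw [sum_Icc_neg_natAbs (ψ a)]
    simp [ψ]
  have hψ0 : ∀ b, ψ 0 b = 0 := by simp [ψ]
  have hbox : ∑ x ∈ Ioc 0 ⌊D⌋₊ ×ˢ Ioc 0 ⌊R⌋₊, φ x.1 x.2 =
      ∑ x ∈ Ioc 0 ⌊D⌋₊ ×ˢ Ioc 0 ⌊R⌋₊, ψ x.1 x.2 :=
    sum_congr rfl fun x hx => (if_pos (mem_product.1 hx)).symm
  simp_rw [hψ]
  rw [tsum_eq_sum (s := Icc (-(⌊D⌋₊ : ℤ)) ⌊D⌋₊ ×ˢ Icc (-(⌊R⌋₊ : ℤ)) ⌊R⌋₊), sum_product]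
  · simp_rw [hrow]
    rw [sum_Icc_neg_natAbs (fun a => 2 • ∑ b ∈ Ioc 0 ⌊R⌋₊, ψ a b), hbox, sum_product]
    simp only [hψ0, sum_const_zero, smul_zero, zero_add, nsmul_eq_mul, mul_sum, ← mul_assoc]
    norm_num
  · intro dr hdr
    simp only [ψ, mem_Ioc]
    rw [if_neg]
    contrapose! hdr
    simp only [mem_product, mem_Icc]
    omega

lemma one_add_log_pow_le (n : ℕ) {ε x : ℝ} (hε : 0 < ε) (hx : 1 ≤ x) :
    (1 + log x) ^ n ≤ (1 + n / ε) ^ n * x ^ ε := by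
  rcases Nat.eq_zero_or_pos n with rfl | hn
  · simpa using one_le_rpow hx hε.le
  have hx0 : 0 ≤ x := by linarith
  have hδ : 0 < ε / n := by positivity
  have hlog : 1 + log x ≤ (1 + n / ε) * x ^ (ε / n) := by
    have h1 : 1 ≤ x ^ (ε / n) := one_le_rpow hx hδ.le
    have h2 : log x ≤ x ^ (ε / n) / (ε / n) := log_le_rpow_div hx0 hδ
    have h3 : (1 + n / ε) * x ^ (ε / n) = x ^ (ε / n) + x ^ (ε / n) / (ε / n) := by
      field_simp
    linarith
  calc (1 + log x) ^ n ≤ ((1 + n / ε) * x ^ (ε / n)) ^ n :=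
        pow_le_pow_left₀ (by linarith [log_nonneg hx]) hlog n
    _ = (1 + n / ε) ^ n * x ^ ε := by
        rw [mul_pow, ← rpow_natCast (x ^ _), ← rpow_mul hx0,
          div_mul_cancel₀ _ (Nat.cast_ne_zero.2 hn.ne')]

/-- `Σ_{0<|d|≤D, 0<|r|≤R} N(dr³) ≪_ε D^{1+ε} R^{2+ε}`. -/
theorem sum_N_bound :
    ∀ ε > (0 : ℝ), ∃ C > (0 : ℝ), ∀ D R : ℝ, 1 ≤ D → 1 ≤ R →
      (∑' dr : ℤ × ℤ,
          if 0 < |dr.1| ∧ (|dr.1| : ℝ) ≤ D ∧ 0 < |dr.2| ∧ (|dr.2| : ℝ) ≤ R then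
            (N (dr.1 * dr.2 ^ 3) : ℝ)
          else 0)
        ≤ C * D ^ ((1 : ℝ) + ε) * R ^ ((2 : ℝ) + ε) := by
  intro ε hε
  refine ⟨4 * (1 + 4 / ε) ^ 4, by positivity, fun D R hD hR => ?_⟩
  have hA : (1 : ℝ) ≤ ⌊D⌋₊ := mod_cast (Nat.one_le_floor_iff D).2 hD
  have hB : (1 : ℝ) ≤ ⌊R⌋₊ := mod_cast (Nat.one_le_floor_iff R).2 hR
  have hAD : (⌊D⌋₊ : ℝ) ≤ D := Nat.floor_le (by linarith)
  have hBR : (⌊R⌋₊ : ℝ) ≤ R := Nat.floor_le (by linarith)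
  simp only [N_eq_Nnat, Int.natAbs_mul, Int.natAbs_pow]
  calc _ = 4 * ∑ x ∈ Ioc 0 ⌊D⌋₊ ×ˢ Ioc 0 ⌊R⌋₊, (Nnat (x.1 * x.2 ^ 3) : ℝ) :=
        tsum_box_eq (fun a b => (Nnat (a * b ^ 3) : ℝ)) (by linarith) (by linarith)
    _ ≤ 4 * (⌊D⌋₊ * ⌊R⌋₊ ^ 2 * (1 + log (⌊D⌋₊ * ⌊R⌋₊)) ^ 4) := by
        gcongr
        exact sum_Nnat_mul_cube_le _ _
    _ ≤ 4 * (⌊D⌋₊ * ⌊R⌋₊ ^ 2 * ((1 + 4 / ε) ^ 4 * (⌊D⌋₊ * ⌊R⌋₊ : ℝ) ^ ε)) := by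
        gcongr
        exact_mod_cast one_add_log_pow_le 4 hε (one_le_mul_of_one_le_of_one_le hA hB)
    _ = 4 * (1 + 4 / ε) ^ 4 * ((⌊D⌋₊ : ℝ) ^ (1 + ε) * (⌊R⌋₊ : ℝ) ^ (2 + ε)) := by
        rw [mul_rpow (by positivity) (by positivity), rpow_one_add' (by positivity) (by positivity),
          rpow_add' (by positivity) (by positivity), rpow_two]
        ring
    _ ≤ 4 * (1 + 4 / ε) ^ 4 * D ^ ((1 : ℝ) + ε) * R ^ ((2 : ℝ) + ε) := by
        rw [mul_assoc _ (D ^ _)]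
        gcongr

end BQPaper18
end
end
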